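/- At the point (β₀, α₀) = ((ρ+h)/3, ρ + 1/h), the value λ = 0 is a root of the characteristic function f(λ) = λ(ρ cot λ + cot(hλ)) − α + βλ² of multiplicity exactly four: extending f analytically by its value at 0, one has f(0) = f'(0) = f''(0) = f'''(0) = 0 and f''''(0) ≠ 0 (with f''''(0)/4! = γ₃ = (ρ+h³)/45 up to sign convention). -/

import Mathlib

/-!
Expanding `sin` to order 5 and `cos` to order 4 with analytic remainders gives
`λ cot λ = 1 - λ²/3 + λ⁴ R(λ)` near `0` with `R` analytic and `R 0 = 1/24 - 1/18 - 1/120 = -1/45`.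
The choice of `α` and `β` cancels the terms of order `0` and `2`, so `f λ = λ⁴ G(λ)` near `0`
with `G λ = ρ R(λ) + h³ R(hλ)`; by the Leibniz rule the derivatives of `f` of order `< 4` vanish
at `0` and `f⁗(0) = 4! G(0) = -24 (ρ + h³)/45`.
-/

open Filter Topology Real

section Taylor

variable {𝕜 : Type*} [NontriviallyNormedField 𝕜]

theorem AnalyticAt.exists_eq_sum_add_pow_mul_and_apply_zero [CharZero 𝕜] [CompleteSpace 𝕜]
    {f : 𝕜 → 𝕜} (hf : AnalyticAt 𝕜 f 0) (n : ℕ) :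
    ∃ F : 𝕜 → 𝕜, AnalyticAt 𝕜 F 0 ∧ F 0 = iteratedDeriv n f 0 / n.factorial ∧ ∀ z,
      f z = (∑ i ∈ .range n, z ^ i / i.factorial * iteratedDeriv i f 0) + z ^ n * F z := by
  obtain ⟨F, hF, hfF⟩ := hf.exists_eq_sum_add_pow_mul (n + 1)
  refine ⟨fun z ↦ iteratedDeriv n f 0 / n.factorial + z * F z, by fun_prop, by simp, fun z ↦ ?_⟩
  rw [hfF z, Finset.sum_range_succ]
  simp only [smul_eq_mul]
  ring

theorem iteratedDeriv_eq_of_eventuallyEq_pow_mul {f g : 𝕜 → 𝕜} {n : ℕ}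
    (hg : ContDiffAt 𝕜 n g 0) (hfg : f =ᶠ[𝓝 0] fun z ↦ z ^ n * g z) :
    (∀ k < n, iteratedDeriv k f 0 = 0) ∧ iteratedDeriv n f 0 = n.factorial * g 0 := by
  have leibniz : ∀ k ≤ n, iteratedDeriv k f 0 = ∑ i ∈ .range (k + 1),
      k.choose i * (if i = n then (n.factorial : 𝕜) else 0) * iteratedDeriv (k - i) g 0 := by
    intro k hk
    rw [hfg.iteratedDeriv_eq, iteratedDeriv_fun_mul (f := (· ^ n)) (contDiffAt_id.pow n)
      (hg.of_le (by exact_mod_cast hk))]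
    simp only [iteratedDeriv_fun_pow_zero, Nat.cast_ite, Nat.cast_zero]
  refine ⟨fun k hk ↦ ?_, ?_⟩
  · rw [leibniz k hk.le]
    refine Finset.sum_eq_zero fun i hi ↦ ?_
    have : i ≠ n := by have := Finset.mem_range.mp hi; omega
    simp [this]
  · rw [leibniz n le_rfl, Finset.sum_eq_single_of_mem n (by simp)]
    · simp
    · intro i _ hi; simp [hi]

end Taylor

theorem exists_mul_cot_eq_taylor :
    ∃ R : ℝ → ℝ, AnalyticAt ℝ R 0 ∧ R 0 = -1 / 45 ∧
      ∀ᶠ x in 𝓝 0, x ≠ 0 → x * (cos x / sin x) = 1 - x ^ 2 / 3 + x ^ 4 * R x := by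
  obtain ⟨T, hT, hT0, hsin⟩ := analyticAt_sin.exists_eq_sum_add_pow_mul_and_apply_zero 5
  obtain ⟨C, hC, hC0, hcos⟩ := analyticAt_cos.exists_eq_sum_add_pow_mul_and_apply_zero 4
  simp only [Finset.sum_range_succ, Finset.sum_range_zero, iteratedDeriv_zero] at hsin hcos
  norm_num [Nat.factorial] at hsin hcos hT0 hC0
  set S : ℝ → ℝ := fun x ↦ 1 - x ^ 2 / 6 + x ^ 4 * T x
  have hS : AnalyticAt ℝ S 0 := by fun_prop
  have hS0 : S 0 ≠ 0 := by simp [S]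
  refine ⟨fun x ↦ (C x - 1 / 18 - T x + x ^ 2 * T x / 3) / S x,
    AnalyticAt.div (by fun_prop) hS hS0, ?_, ?_⟩
  · norm_num [S, hT0, hC0]
  · filter_upwards [hS.continuousAt.eventually_ne hS0] with x hSx hx
    have : sin x = x * S x := by rw [hsin]; ring
    rw [this, hcos]
    field_simp
    ring

/-- At `(β₀, α₀) = ((ρ+h)/3, ρ + 1/h)`, the characteristic function
`f(λ) = λ(ρ cot λ + cot(hλ)) − α + βλ²`, extended by continuity at `0`,
has a root of multiplicity exactly four at `λ = 0`, with fourth Taylor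
coefficient `±γ₃ = ±(ρ+h³)/45`. -/
theorem stmt_12 (ρ h : ℝ) (hρ : ρ ∈ Set.Ico (0:ℝ) 1) (hh : 0 < h)
    (α β : ℝ) (hα : α = ρ + 1/h) (hβ : β = (ρ + h)/3)
    (f : ℝ → ℝ)
    (hf : ∀ l : ℝ, l ≠ 0 → f l
      = l * (ρ * (Real.cos l / Real.sin l) + Real.cos (h*l) / Real.sin (h*l)) - α + β * l^2)
    (hf0 : f 0 = ρ + 1/h - α) :
    f 0 = 0 ∧ deriv f 0 = 0 ∧ iteratedDeriv 2 f 0 = 0 ∧ iteratedDeriv 3 f 0 = 0 ∧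
      iteratedDeriv 4 f 0 ≠ 0 ∧ |iteratedDeriv 4 f 0 / 24| = (ρ + h^3)/45 := by
  obtain ⟨R, hR, hR0, hcot⟩ := exists_mul_cot_eq_taylor
  set G : ℝ → ℝ := fun x ↦ ρ * R x + h ^ 3 * R (h * x)
  have hG : AnalyticAt ℝ G 0 := by
    have : AnalyticAt ℝ R (h * 0) := by rwa [mul_zero]
    fun_prop
  have hcot_h : ∀ᶠ x in 𝓝 0, x ≠ 0 →
      (h * x) * (cos (h * x) / sin (h * x)) = 1 - (h * x) ^ 2 / 3 + (h * x) ^ 4 * R (h * x) :=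
    ((continuous_const.mul continuous_id).tendsto' 0 0 (mul_zero h)).eventually hcot
      |>.mono fun x hx hx0 ↦ hx (mul_ne_zero hh.ne' hx0)
  have hfG : f =ᶠ[𝓝 0] fun x ↦ x ^ 4 * G x := by
    filter_upwards [hcot, hcot_h] with x hx hhx
    rcases eq_or_ne x 0 with rfl | hx0
    · simp [hf0, hα]
    · have hsplit : x * (ρ * (cos x / sin x) + cos (h * x) / sin (h * x))
          = ρ * (x * (cos x / sin x)) + h⁻¹ * (h * x * (cos (h * x) / sin (h * x))) := by
        field_simp
      rw [hf x hx0, hsplit, hx hx0, hhx hx0, hα, hβ]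
      simp only [G]
      field_simp
      ring
  obtain ⟨hlow, hfourth⟩ := iteratedDeriv_eq_of_eventuallyEq_pow_mul hG.contDiffAt hfG
  have h4 : iteratedDeriv 4 f 0 = -(24 * (ρ + h ^ 3) / 45) := by
    rw [hfourth]; simp [G, hR0]; ring
  have hpos : 0 < ρ + h ^ 3 := by have := hρ.1; positivity
  refine ⟨by simp [hf0, hα], by simpa using hlow 1 (by norm_num), hlow 2 (by norm_num),
    hlow 3 (by norm_num), by rw [h4]; linarith, ?_⟩
  rw [h4, abs_of_neg (by linarith)]
  ring
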